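/- arXiv:2303.14446 — 2 statements merged into one kernel-verified Lean document; each statement's English description precedes it below -/
import Mathlib

section
/- UPLA key lemma (semantic form): let Ψ = Π : φ be a DQBF, ℓ a literal, V' = dep(ℓ), and κ a literal such that every Skolem function of abs(Π : φ ∧ ℓ, V') makes κ constantly true. Then abs(Π : φ, V') ≡ abs(Π : φ ∧ (¬ℓ ∨ κ), V'). -/
/- Formalization of DQBF (dependency quantified Boolean formulas),
   Skolem-function semantics, abstraction, and clause operations. -/

attribute [local instance] Classical.propDecidable

namespace DQBFPaper

/-- An assignment of Boolean values to the variables. -/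
abbrev Assignment (V : Type) := V → Bool

/-- A DQBF over variables `V`: the variables in `exVars` are existential
    (with dependency sets given by `dep`), the others are universal;
    `matrix` is the quantifier-free part. -/
structure DQBF (V : Type) where
  exVars : Set V
  dep : V → Set V
  matrix : Assignment V → Prop

/-- A literal: a variable together with a polarity (`true` = positive). -/
abbrev Lit (V : Type) := V × Bool

/-- Evaluation of a literal under an assignment. -/
def Lit.eval {V : Type} (a : Assignment V) (l : Lit V) : Bool :=
  if l.2 then a l.1 else !a l.1

/-- Negation of a literal. -/
def Lit.neg {V : Type} (l : Lit V) : Lit V := (l.1, !l.2)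

/-- A clause: a set of literals (interpreted disjunctively). -/
abbrev Clause (V : Type) := Set (Lit V)

/-- A clause is true iff some literal in it is true. -/
def Clause.eval {V : Type} (a : Assignment V) (C : Clause V) : Prop :=
  ∃ l ∈ C, Lit.eval a l = true

/-- A clause is non-tautological if no variable occurs with both polarities. -/
def NonTaut {V : Type} (C : Clause V) : Prop :=
  ∀ v : V, ¬((v, true) ∈ C ∧ (v, false) ∈ C)

namespace DQBF

variable {V : Type}

/-- The universal variables of a DQBF. -/
def univVars (Ψ : DQBF V) : Set V := Ψ.exVarsᶜ

/-- Well-formedness: dependency sets of existential variables consist of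
    universal variables only. -/
def WellFormed (Ψ : DQBF V) : Prop :=
  ∀ y ∈ Ψ.exVars, Ψ.dep y ⊆ Ψ.exVarsᶜ

/-- Substituting candidate Skolem functions `s` for the existential variables,
    given an assignment `a` of the universal variables. -/
noncomputable def subst (Ψ : DQBF V) (s : V → Assignment V → Bool)
    (a : Assignment V) : Assignment V :=
  fun v => if v ∈ Ψ.exVars then s v a else a v

/-- `s` respects the dependency sets: the value of each existential variable
    only depends on the assignment of its dependency set. -/
def Respects (Ψ : DQBF V) (s : V → Assignment V → Bool) : Prop :=
  ∀ y ∈ Ψ.exVars, ∀ a b : Assignment V, (∀ x ∈ Ψ.dep y, a x = b x) → s y a = s y b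

/-- `s` is a Skolem function for `Ψ`: it respects the dependencies and
    substituting it turns the matrix into a tautology. -/
def IsSkolem (Ψ : DQBF V) (s : V → Assignment V → Bool) : Prop :=
  Ψ.Respects s ∧ ∀ a : Assignment V, Ψ.matrix (Ψ.subst s a)

/-- A DQBF is satisfiable iff it has a Skolem function. -/
def Satisfiable (Ψ : DQBF V) : Prop := ∃ s, Ψ.IsSkolem s

/-- Two DQBFs (over the same prefix) are equivalent iff they have exactly the
    same Skolem functions. -/
def Equivalent (Ψ₁ Ψ₂ : DQBF V) : Prop := ∀ s, Ψ₁.IsSkolem s ↔ Ψ₂.IsSkolem s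

/-- Equi-satisfiability. -/
def EquiSat (Ψ₁ Ψ₂ : DQBF V) : Prop := Ψ₁.Satisfiable ↔ Ψ₂.Satisfiable

/-- Abstraction w.r.t. a set `V'` of universal variables: each variable of `V'`
    becomes existential with empty dependency set (and is removed from all
    dependency sets); the matrix is unchanged. -/
noncomputable def abst (Ψ : DQBF V) (V' : Set V) : DQBF V where
  exVars := Ψ.exVars ∪ V'
  dep := fun v => if v ∈ V' then ∅ else Ψ.dep v \ V'
  matrix := Ψ.matrix

/-- Conjoin a clause to the matrix. -/
def addClause (Ψ : DQBF V) (C : Clause V) : DQBF V :=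
  { Ψ with matrix := fun a => Ψ.matrix a ∧ Clause.eval a C }

/-- Conjoin the negation of a clause (i.e. the unit clauses negating each of
    its literals) to the matrix. -/
def addNegClause (Ψ : DQBF V) (C : Clause V) : DQBF V :=
  { Ψ with matrix := fun a => Ψ.matrix a ∧ ∀ l ∈ C, Lit.eval a l = false }

/-- Generalized dependencies: `dep v = {v}` for universal `v`,
    `dep v = D_v` for existential `v`. -/
noncomputable def depVar (Ψ : DQBF V) (v : V) : Set V :=
  if v ∈ Ψ.exVars then Ψ.dep v else {v}

/-- Dependencies of a literal. -/
noncomputable def depLit (Ψ : DQBF V) (l : Lit V) : Set V := Ψ.depVar l.1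

/-- Dependencies of a clause. -/
noncomputable def depClause (Ψ : DQBF V) (C : Clause V) : Set V :=
  ⋃ l ∈ C, Ψ.depLit l

/-- Under the Skolem candidate `s`, the literal `l` is constantly true,
    i.e. true for every assignment of the universal variables. -/
noncomputable def ConstTrue (Ψ : DQBF V) (s : V → Assignment V → Bool)
    (l : Lit V) : Prop :=
  ∀ a : Assignment V, Lit.eval (Ψ.subst s a) l = true

/-- A DQBF with a CNF matrix given by a set of clauses. -/
def mkCNF (exVars : Set V) (dep : V → Set V) (φ : Set (Clause V)) : DQBF V :=
  ⟨exVars, dep, fun a => ∀ C ∈ φ, Clause.eval a C⟩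

/-- Universal reduction of a clause: remove every universal literal on which
    no existential literal of the clause depends. -/
def urClause (Ψ : DQBF V) (C : Clause V) : Clause V :=
  C \ {l | l.1 ∉ Ψ.exVars ∧ ∀ k ∈ C, k.1 ∈ Ψ.exVars → l.1 ∉ Ψ.dep k.1}

/-- Outer variables of an existential variable `v`. -/
noncomputable def ovEx (Ψ : DQBF V) (v : V) : Set V :=
  {w | Ψ.depVar w ⊆ Ψ.depVar v}

/-- The kernel of a universal variable `v`. -/
def kernel (Ψ : DQBF V) (v : V) : Set V :=
  ⋂ y ∈ {y | y ∈ Ψ.exVars ∧ v ∈ Ψ.dep y}, Ψ.dep y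

/-- Outer variables of a universal variable `v`. -/
def ovUniv (Ψ : DQBF V) (v : V) : Set V :=
  Ψ.kernel v ∪ {y | y ∈ Ψ.exVars ∧ v ∉ Ψ.dep y ∧ Ψ.dep y ⊆ Ψ.kernel v}

/-- The outer clause of `D` w.r.t. a set of outer variables. -/
def OC (D : Clause V) (OV : Set V) : Clause V := {k ∈ D | k.1 ∈ OV}

/-- Outer resolvent for an existential pivot literal `l ∈ C`. -/
noncomputable def orEx (Ψ : DQBF V) (C D : Clause V) (l : Lit V) : Clause V :=
  C ∪ (OC D (Ψ.ovEx l.1) \ {Lit.neg l})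

/-- Outer resolvent for a universal pivot literal `l ∈ C`. -/
def orUniv (Ψ : DQBF V) (C D : Clause V) (l : Lit V) : Clause V :=
  (C \ {l}) ∪ OC D (Ψ.ovUniv l.1)

/-- Outer resolvent (case split on the quantifier type of the pivot). -/
noncomputable def orRes (Ψ : DQBF V) (C D : Clause V) (l : Lit V) : Clause V :=
  if l.1 ∈ Ψ.exVars then Ψ.orEx C D l else Ψ.orUniv C D l

end DQBF

end DQBFPaper

/-! Abstracting `dep(ℓ)` makes the variable of `ℓ` existential with empty dependency set, so
every Skolem function makes `ℓ` either constantly false, and then `¬ℓ` holds everywhere, or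
constantly true, and then it is a Skolem function of the formula with `ℓ` added, so `κ` holds
everywhere. Either way the clause `¬ℓ ∨ κ` is satisfied. -/

namespace DQBFPaper

theorem Lit.eval_neg {V : Type} (a : Assignment V) (l : Lit V) :
    Lit.eval a (Lit.neg l) = !Lit.eval a l := by
  obtain ⟨v, _ | _⟩ := l <;> simp [Lit.eval, Lit.neg]

namespace DQBF

variable {V : Type}

theorem mem_exVars_abst_depVar (Ψ : DQBF V) (v : V) : v ∈ (Ψ.abst (Ψ.depVar v)).exVars := by
  by_cases hv : v ∈ Ψ.exVars
  · exact Or.inl hv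
  · exact Or.inr (by simp [depVar, hv])

theorem dep_abst_depVar (Ψ : DQBF V) (v : V) : (Ψ.abst (Ψ.depVar v)).dep v = ∅ := by
  by_cases hv : v ∈ Ψ.exVars <;> simp [abst, depVar, hv]

theorem abst_addClause (Ψ : DQBF V) (C : Clause V) (V' : Set V) :
    (Ψ.addClause C).abst V' = (Ψ.abst V').addClause C := rfl

theorem isSkolem_addClause_iff (Φ : DQBF V) (C : Clause V) (s : V → Assignment V → Bool) :
    (Φ.addClause C).IsSkolem s ↔ Φ.IsSkolem s ∧ ∀ a, Clause.eval (Φ.subst s a) C :=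
  ⟨fun ⟨hr, hm⟩ => ⟨⟨hr, fun a => (hm a).1⟩, fun a => (hm a).2⟩,
    fun ⟨⟨hr, hm⟩, hC⟩ => ⟨hr, fun a => ⟨hm a, hC a⟩⟩⟩

theorem Respects.lit_eval_subst_eq {Φ : DQBF V} {s : V → Assignment V → Bool}
    (hs : Φ.Respects s) {l : Lit V} (hex : l.1 ∈ Φ.exVars) (hdep : Φ.dep l.1 = ∅)
    (a b : Assignment V) : Lit.eval (Φ.subst s a) l = Lit.eval (Φ.subst s b) l := by
  have hconst : s l.1 a = s l.1 b := hs l.1 hex a b (by simp [hdep])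
  simp only [Lit.eval, subst, if_pos hex, hconst]

theorem equivalent_addClause_neg_or_of_forall_constTrue (Φ : DQBF V) (l κ : Lit V)
    (hex : l.1 ∈ Φ.exVars) (hdep : Φ.dep l.1 = ∅)
    (h : ∀ s, (Φ.addClause {l}).IsSkolem s → (Φ.addClause {l}).ConstTrue s κ) :
    Φ.Equivalent (Φ.addClause {Lit.neg l, κ}) := by
  intro s
  rw [isSkolem_addClause_iff]
  refine ⟨fun hs => ⟨hs, fun a => ?_⟩, And.left⟩
  by_cases hl : Lit.eval (Φ.subst s a) l = true
  · have hsl : (Φ.addClause {l}).IsSkolem s := by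
      rw [isSkolem_addClause_iff]
      refine ⟨hs, fun b => ⟨l, rfl, ?_⟩⟩
      rwa [hs.1.lit_eval_subst_eq hex hdep b a]
    exact ⟨κ, Or.inr rfl, h s hsl a⟩
  · refine ⟨Lit.neg l, Or.inl rfl, ?_⟩
    simpa [Lit.eval_neg] using hl

end DQBF

open DQBF

theorem upla_key_lemma_general {V : Type} (Ψ : DQBF V) (l κ : Lit V)
    (h : ∀ s, ((Ψ.addClause {l}).abst (Ψ.depLit l)).IsSkolem s →
      ((Ψ.addClause {l}).abst (Ψ.depLit l)).ConstTrue s κ) :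
    (Ψ.abst (Ψ.depLit l)).Equivalent
      ((Ψ.addClause {Lit.neg l, κ}).abst (Ψ.depLit l)) := by
  rw [abst_addClause] at h ⊢
  exact equivalent_addClause_neg_or_of_forall_constTrue _ l κ
    (mem_exVars_abst_depVar Ψ l.1) (dep_abst_depVar Ψ l.1) h

/-- UPLA key lemma: with `V' = dep(ℓ)`, if every Skolem function
of `abs(Π : φ ∧ ℓ, V')` makes the literal `κ` constantly true, then
`abs(Π : φ, V') ≡ abs(Π : φ ∧ (¬ℓ ∨ κ), V')`. -/
theorem upla_key_lemma {V : Type} (Ψ : DQBF V) (l κ : Lit V)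
    (hwf : Ψ.WellFormed)
    (h : ∀ s, ((Ψ.addClause {l}).abst (Ψ.depLit l)).IsSkolem s →
      ((Ψ.addClause {l}).abst (Ψ.depLit l)).ConstTrue s κ) :
    (Ψ.abst (Ψ.depLit l)).Equivalent
      ((Ψ.addClause {Lit.neg l, κ}).abst (Ψ.depLit l)) :=
  upla_key_lemma_general Ψ l κ h

end DQBFPaper
end

section
/- DQAT redundancy: let Ψ = Π : φ be a DQBF, C a compatible clause, and V' = dep(C). If abs(Π : φ ∧ ¬C, V') is unsatisfiable (in particular if unit propagation with universal reduction derives a conflict), then Π : φ and Π : φ ∧ C are equivalent; hence C can be deleted from or added to the formula without changing its set of Skolem functions. -/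
/- Formalization of DQBF (dependency quantified Boolean formulas),
   Skolem-function semantics, abstraction, and clause operations. -/

attribute [local instance] Classical.propDecidable

/-! Suppose a Skolem function `s` of `Ψ` falsifies `C` at some assignment `a`. Freezing the
(universal) variables of `V' = dep(C)` to their values under `a` turns `s` into a Skolem function
of `abs(Ψ ∧ ¬C, V')`: every literal of `C` depends only on `V'`, so it keeps its value under `a`
and stays false, while `φ` holds because `s` is a Skolem function of `Ψ`. -/

namespace DQBFPaper

theorem Lit.eval_congr {V : Type} {a b : Assignment V} {l : Lit V} (h : a l.1 = b l.1) :
    Lit.eval a l = Lit.eval b l := by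
  simp only [Lit.eval, h]

namespace DQBF

variable {V : Type} {Ψ : DQBF V} {s : V → Assignment V → Bool}

theorem depVar_subset_depClause {C : Clause V} {l : Lit V} (hl : l ∈ C) :
    Ψ.depVar l.1 ⊆ Ψ.depClause C :=
  Set.subset_biUnion_of_mem (u := Ψ.depLit) hl

theorem depClause_subset_univVars (hwf : Ψ.WellFormed) (C : Clause V) :
    Ψ.depClause C ⊆ Ψ.univVars := by
  intro x hx
  obtain ⟨l, -, hx⟩ := Set.mem_iUnion₂.mp hx
  unfold depLit depVar at hx
  split_ifs at hx with hl
  · exact hwf l.1 hl hx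
  · rwa [Set.mem_singleton_iff.mp hx]

theorem subst_apply_congr (hs : Ψ.Respects s) {a b : Assignment V} {v : V}
    (hab : Set.EqOn a b (Ψ.depVar v)) : Ψ.subst s a v = Ψ.subst s b v := by
  unfold subst
  unfold depVar at hab
  split_ifs at hab ⊢ with hv
  · exact hs v hv a b hab
  · exact hab rfl

theorem isSkolem_addClause_iff_s15 {C : Clause V} :
    (Ψ.addClause C).IsSkolem s ↔ Ψ.IsSkolem s ∧ ∀ a, Clause.eval (Ψ.subst s a) C :=
  ⟨fun hs => ⟨⟨hs.1, fun a => (hs.2 a).1⟩, fun a => (hs.2 a).2⟩,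
    fun hs => ⟨hs.1.1, fun a => ⟨hs.1.2 a, hs.2 a⟩⟩⟩

noncomputable def freeze (s : V → Assignment V → Bool) (V' : Set V) (a : Assignment V) :
    V → Assignment V → Bool :=
  fun v b => if v ∈ V' then a v else s v (V'.piecewise a b)

variable {V' : Set V} {a : Assignment V}

theorem respects_abst_freeze (hs : Ψ.Respects s) : (Ψ.abst V').Respects (freeze s V' a) := by
  intro y hy b c hbc
  unfold freeze
  split_ifs with hyV
  · rfl
  have hyE : y ∈ Ψ.exVars := hy.resolve_right hyV
  refine hs y hyE _ _ fun x hx => ?_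
  by_cases hxV : x ∈ V'
  · simp only [Set.piecewise_eq_of_mem _ _ _ hxV]
  · simp only [Set.piecewise_eq_of_notMem _ _ _ hxV]
    exact hbc x (by simp only [abst, if_neg hyV]; exact ⟨hx, hxV⟩)

theorem subst_abst_freeze (hV' : V' ⊆ Ψ.univVars) (b : Assignment V) :
    (Ψ.abst V').subst (freeze s V' a) b = Ψ.subst s (V'.piecewise a b) := by
  funext v
  by_cases hvV : v ∈ V'
  · have hvE : v ∉ Ψ.exVars := hV' hvV
    simp [subst, abst, freeze, hvV, hvE]
  · by_cases hvE : v ∈ Ψ.exVars <;> simp [subst, abst, freeze, hvV, hvE]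

theorem satisfiable_abst_addNegClause (hwf : Ψ.WellFormed) {C : Clause V} (hs : Ψ.IsSkolem s)
    (hC : ¬ Clause.eval (Ψ.subst s a) C) :
    ((Ψ.addNegClause C).abst (Ψ.depClause C)).Satisfiable := by
  have hfalse : ∀ l ∈ C, Lit.eval (Ψ.subst s a) l = false := by
    simpa [Clause.eval] using hC
  refine ⟨freeze s (Ψ.depClause C) a, respects_abst_freeze hs.1, fun b => ?_⟩
  rw [subst_abst_freeze (Ψ := Ψ.addNegClause C) (depClause_subset_univVars hwf C)]
  refine ⟨hs.2 _, fun l hl => ?_⟩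
  rw [← hfalse l hl]
  refine Lit.eval_congr (subst_apply_congr hs.1 fun x hx => ?_)
  exact Set.piecewise_eq_of_mem _ _ _ (depVar_subset_depClause hl hx)

end DQBF

open DQBF

/-- DQAT redundancy: with `V' = dep(C)`, if
`abs(Π : φ ∧ ¬C, V')` is unsatisfiable, then `Π : φ` and `Π : φ ∧ C` are
equivalent, so `C` can be deleted or added without changing the Skolem
functions. -/
theorem dqat_redundant {V : Type} (Ψ : DQBF V) (C : Clause V)
    (hwf : Ψ.WellFormed)
    (h : ¬ ((Ψ.addNegClause C).abst (Ψ.depClause C)).Satisfiable) :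
    Ψ.Equivalent (Ψ.addClause C) := by
  intro s
  rw [isSkolem_addClause_iff_s15]
  refine ⟨fun hs => ⟨hs, fun a => ?_⟩, And.left⟩
  by_contra hC
  exact h (satisfiable_abst_addNegClause hwf hs hC)

end DQBFPaper
end
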